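/- Let P(t) be a differentiable family of symmetric positive definite m×m matrices solving Ṗ = A₁(t)P + PA₁(t)ᵀ + Q(t) − PC₁(t)ᵀR(t)⁻¹C₁(t)P, with Q(t) symmetric satisfying Q(t) ⪰ q₁I (q₁ > 0), R(t) symmetric positive definite, and suppose P(t)⁻¹ ⪰ p₁I for all t ≥ 0 (p₁ > 0). Let η̃(t) solve η̃̇ = [A₁(t) − P(t)C₁(t)ᵀR(t)⁻¹C₁(t)]η̃. Then V₂(t) = η̃(t)ᵀP(t)⁻¹η̃(t) satisfies dV₂/dt ≤ −k₁ V₂(t) for all t ≥ 0, with k₁ = q₁p₁ > 0. -/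

import Mathlib

/-!
Write `S = P⁻¹` and `F = A₁ - P C₁ᵀ R⁻¹ C₁`. Since `Ṡ = -S Ṗ S`, along the error dynamics
`V̇₂ = η̃ᵀ (Fᵀ S + Ṡ + S F) η̃`, and the Riccati equation collapses this matrix to
`-(C₁ᵀ R⁻¹ C₁ + S Q S)`. The first term is positive semidefinite and `Q ⪰ q₁ I`, so
`V̇₂ ≤ -q₁ ‖S η̃‖²`; finally `S ⪰ p₁ I` and `S ⪰ 0` give `‖S η̃‖² ≥ p₁ η̃ᵀ S η̃` by Cauchy–Schwarz.
-/

open Matrix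

section Calculus

variable {ι κ : Type*} [Fintype ι] {t : ℝ}

theorem HasDerivAt.dotProduct {x y : ℝ → ι → ℝ} {x' y' : ι → ℝ}
    (hx : HasDerivAt x x' t) (hy : HasDerivAt y y' t) :
    HasDerivAt (fun s => x s ⬝ᵥ y s) (x' ⬝ᵥ y t + x t ⬝ᵥ y') t := by
  simp only [_root_.dotProduct, ← Finset.sum_add_distrib]
  exact HasDerivAt.fun_sum fun i _ => (hasDerivAt_pi.1 hx i).mul (hasDerivAt_pi.1 hy i)

-- Any matrix norm would do: derivatives only see the (product) topology.
attribute [local instance] Matrix.linftyOpNormedRing Matrix.linftyOpNormedAlgebra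

theorem hasDerivAt_matrix_iff {M : ℝ → Matrix κ ι ℝ} {M' : Matrix κ ι ℝ} :
    HasDerivAt M M' t ↔ ∀ i j, HasDerivAt (fun s => M s i j) (M' i j) t :=
  ⟨fun h i j => hasDerivAt_pi.1 (hasDerivAt_pi.1 h i) j,
    fun h => hasDerivAt_pi.2 fun i => hasDerivAt_pi.2 (h i)⟩

theorem HasDerivAt.mulVec {M : ℝ → Matrix κ ι ℝ} {M' : Matrix κ ι ℝ} {x : ℝ → ι → ℝ}
    {x' : ι → ℝ} (hM : HasDerivAt M M' t) (hx : HasDerivAt x x' t) :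
    HasDerivAt (fun s => M s *ᵥ x s) (M' *ᵥ x t + M t *ᵥ x') t :=
  hasDerivAt_pi.2 fun i => (hasDerivAt_pi.2 (hasDerivAt_matrix_iff.1 hM i)).dotProduct hx

theorem HasDerivAt.nonsing_inv [DecidableEq ι] {M : ℝ → Matrix ι ι ℝ} {M' : Matrix ι ι ℝ}
    (hM : HasDerivAt M M' t) (hdet : IsUnit (M t).det) :
    HasDerivAt (fun s => (M s)⁻¹) (-((M t)⁻¹ * M' * (M t)⁻¹)) t := by
  have hunit : IsUnit (M t) := (isUnit_iff_isUnit_det _).2 hdet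
  simp only [nonsing_inv_eq_ringInverse]
  refine ((hasFDerivAt_ringInverse (𝕜 := ℝ) hunit.unit).comp_hasDerivAt t hM).congr_deriv ?_
  simp only [coe_units_inv, IsUnit.unit_spec, nonsing_inv_eq_ringInverse, _root_.neg_apply,
    ContinuousLinearMap.mulLeftRight_apply]

end Calculus

section QuadraticForms

variable {ι κ : Type*} [Fintype ι]

theorem dotProduct_mulVec_add_dotProduct_mulVec (F S S' : Matrix ι ι ℝ) (x : ι → ℝ) :
    (F *ᵥ x) ⬝ᵥ (S *ᵥ x) + x ⬝ᵥ (S' *ᵥ x + S *ᵥ (F *ᵥ x)) =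
      x ⬝ᵥ ((Fᵀ * S + S' + S * F) *ᵥ x) := by
  rw [dotProduct_comm, dotProduct_mulVec, ← mulVec_transpose, dotProduct_comm, mulVec_mulVec,
    mulVec_mulVec]
  simp only [add_mulVec, dotProduct_add, add_assoc]

variable [DecidableEq ι]

theorem mul_dotProduct_self_le_of_posSemidef_sub {Q : Matrix ι ι ℝ} {c : ℝ}
    (hQ : (Q - c • 1).PosSemidef) (x : ι → ℝ) : c * (x ⬝ᵥ x) ≤ x ⬝ᵥ (Q *ᵥ x) := by
  simpa only [star_trivial, sub_mulVec, dotProduct_sub, smul_mulVec, one_mulVec,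
    dotProduct_smul, smul_eq_mul, sub_nonneg] using hQ.dotProduct_mulVec_nonneg x

theorem mul_dotProduct_mulVec_le_of_posSemidef_sub {S : Matrix ι ι ℝ} {c : ℝ}
    (hS : S.PosSemidef) (hSc : (S - c • 1).PosSemidef) (x : ι → ℝ) :
    c * (x ⬝ᵥ (S *ᵥ x)) ≤ (S *ᵥ x) ⬝ᵥ (S *ᵥ x) := by
  set w := S *ᵥ x
  have hxw : c * (x ⬝ᵥ x) ≤ x ⬝ᵥ w := mul_dotProduct_self_le_of_posSemidef_sub hSc x
  have hcs : (x ⬝ᵥ w) ^ 2 ≤ (x ⬝ᵥ x) * (w ⬝ᵥ w) := by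
    simpa only [dotProduct, sq] using Finset.sum_mul_sq_le_sq_mul_sq Finset.univ x w
  have hv : 0 ≤ x ⬝ᵥ w := by simpa only [star_trivial] using hS.dotProduct_mulVec_nonneg x
  have hx : 0 ≤ x ⬝ᵥ x := Finset.sum_nonneg fun i _ => mul_self_nonneg (x i)
  have hw : 0 ≤ w ⬝ᵥ w := Finset.sum_nonneg fun i _ => mul_self_nonneg (w i)
  rcases le_or_gt c 0 with hc | hc
  · nlinarith [mul_nonpos_of_nonpos_of_nonneg hc hv]
  rcases hv.eq_or_lt with hv0 | hv
  · simpa only [← hv0, mul_zero] using hw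
  refine le_of_mul_le_mul_right ?_ hv
  nlinarith [mul_le_mul_of_nonneg_right hxw hw, mul_le_mul_of_nonneg_left hcs hc.le]

variable [Fintype κ] [DecidableEq κ]

theorem riccati_inv_lyapunov_eq {A P Q : Matrix ι ι ℝ} {C : Matrix κ ι ℝ}
    {R : Matrix κ κ ℝ} (hP : P.IsSymm) (hdet : IsUnit P.det) (hR : R.IsSymm) :
    (A - P * Cᵀ * R⁻¹ * C)ᵀ * P⁻¹ - P⁻¹ * (A * P + P * Aᵀ + Q - P * Cᵀ * R⁻¹ * C * P) * P⁻¹ +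
        P⁻¹ * (A - P * Cᵀ * R⁻¹ * C) =
      -(Cᵀ * R⁻¹ * C + P⁻¹ * Q * P⁻¹) := by
  have cancel_left (X : Matrix ι ι ℝ) : P⁻¹ * (P * X) = X := by
    rw [← Matrix.mul_assoc, nonsing_inv_mul _ hdet, Matrix.one_mul]
  have cancel_right (X : Matrix ι ι ℝ) : X * P * P⁻¹ = X := by
    rw [Matrix.mul_assoc, mul_nonsing_inv _ hdet, Matrix.mul_one]
  simp only [transpose_sub, transpose_mul, transpose_nonsing_inv, transpose_transpose, hP.eq,
    hR.eq, Matrix.mul_add, Matrix.add_mul, Matrix.mul_sub, Matrix.sub_mul, ← Matrix.mul_assoc,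
    cancel_right]
  simp only [Matrix.mul_assoc, cancel_left]
  abel

end QuadraticForms

theorem ekf_lyapunov_decay_general
    {m p : ℕ} (q₁ p₁ : ℝ) (hq₁ : 0 < q₁)
    (A₁ : ℝ → Matrix (Fin m) (Fin m) ℝ) (C₁ : ℝ → Matrix (Fin p) (Fin m) ℝ)
    (Q : ℝ → Matrix (Fin m) (Fin m) ℝ) (R : ℝ → Matrix (Fin p) (Fin p) ℝ)
    (P P' : ℝ → Matrix (Fin m) (Fin m) ℝ)
    (η : ℝ → Fin m → ℝ)
    (hP : ∀ t, (P t).PosDef)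
    (hQ : ∀ t, (Q t - q₁ • (1 : Matrix (Fin m) (Fin m) ℝ)).PosSemidef)
    (hR : ∀ t, (R t).PosDef)
    (hPinv : ∀ t, 0 ≤ t → ((P t)⁻¹ - p₁ • (1 : Matrix (Fin m) (Fin m) ℝ)).PosSemidef)
    (hPdiff : ∀ t i j, HasDerivAt (fun s => P s i j) (P' t i j) t)
    (hRic : ∀ t, P' t =
      A₁ t * P t + P t * (A₁ t)ᵀ + Q t - P t * (C₁ t)ᵀ * (R t)⁻¹ * C₁ t * P t)
    (hη : ∀ t, HasDerivAt η ((A₁ t - P t * (C₁ t)ᵀ * (R t)⁻¹ * C₁ t) *ᵥ η t) t) :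
    ∀ t, 0 ≤ t → ∃ d : ℝ,
      HasDerivAt (fun s => η s ⬝ᵥ ((P s)⁻¹ *ᵥ η s)) d t ∧
      d ≤ -(q₁ * p₁) * (η t ⬝ᵥ ((P t)⁻¹ *ᵥ η t)) := by
  intro t ht
  have hPsymm : (P t).IsSymm := isHermitian_iff_isSymm.1 (hP t).1
  have hdet : IsUnit (P t).det := isUnit_iff_ne_zero.2 (hP t).det_pos.ne'
  have hS : HasDerivAt (fun s => (P s)⁻¹) (-((P t)⁻¹ * P' t * (P t)⁻¹)) t :=
    (hasDerivAt_matrix_iff.2 (hPdiff t)).nonsing_inv hdet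
  refine ⟨_, (hη t).dotProduct (hS.mulVec (hη t)), ?_⟩
  rw [dotProduct_mulVec_add_dotProduct_mulVec, ← sub_eq_add_neg, hRic t,
    riccati_inv_lyapunov_eq hPsymm hdet (isHermitian_iff_isSymm.1 (hR t).1)]
  set S := (P t)⁻¹
  set x := η t
  set w := S *ᵥ x
  have hgain : 0 ≤ x ⬝ᵥ (((C₁ t)ᵀ * (R t)⁻¹ * C₁ t) *ᵥ x) := by
    simpa only [Matrix.mul_assoc, star_trivial, conjTranspose_eq_transpose_of_trivial] using
      ((hR t).inv.posSemidef.conjTranspose_mul_mul_same (C₁ t)).dotProduct_mulVec_nonneg x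
  have hnoise : x ⬝ᵥ ((S * Q t * S) *ᵥ x) = w ⬝ᵥ (Q t *ᵥ w) := by
    rw [← mulVec_mulVec, ← mulVec_mulVec, dotProduct_mulVec, ← mulVec_transpose,
      (isHermitian_iff_isSymm.1 (hP t).inv.1).eq]
  calc x ⬝ᵥ (-((C₁ t)ᵀ * (R t)⁻¹ * C₁ t + S * Q t * S) *ᵥ x)
      = -(x ⬝ᵥ (((C₁ t)ᵀ * (R t)⁻¹ * C₁ t) *ᵥ x)) - w ⬝ᵥ (Q t *ᵥ w) := by
        rw [neg_mulVec, add_mulVec, dotProduct_neg, dotProduct_add, hnoise, neg_add,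
          ← sub_eq_add_neg]
    _ ≤ -(q₁ * (w ⬝ᵥ w)) := by
        linarith [mul_dotProduct_self_le_of_posSemidef_sub (hQ t) w]
    _ ≤ -(q₁ * p₁) * (x ⬝ᵥ w) := by
        have := mul_dotProduct_mulVec_le_of_posSemidef_sub (hP t).inv.posSemidef (hPinv t ht) x
        nlinarith

/-- Lyapunov decay estimate for the extended Kalman filter error dynamics:
along `Ṗ = A₁P + PA₁ᵀ + Q − PC₁ᵀR⁻¹C₁P` with `Q ⪰ q₁I`, `R ≻ 0`, `P⁻¹ ⪰ p₁I`, and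
`η̃̇ = [A₁ − PC₁ᵀR⁻¹C₁]η̃`, the function `V₂ = η̃ᵀP⁻¹η̃` satisfies `dV₂/dt ≤ −k₁V₂`
with `k₁ = q₁p₁`. -/
theorem ekf_lyapunov_decay
    {m p : ℕ} (q₁ p₁ : ℝ) (hq₁ : 0 < q₁) (hp₁ : 0 < p₁)
    (A₁ : ℝ → Matrix (Fin m) (Fin m) ℝ) (C₁ : ℝ → Matrix (Fin p) (Fin m) ℝ)
    (Q : ℝ → Matrix (Fin m) (Fin m) ℝ) (R : ℝ → Matrix (Fin p) (Fin p) ℝ)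
    (P P' : ℝ → Matrix (Fin m) (Fin m) ℝ)
    (η : ℝ → Fin m → ℝ)
    (hP : ∀ t, (P t).PosDef)
    (hQsymm : ∀ t, (Q t).IsSymm)
    (hQ : ∀ t, (Q t - q₁ • (1 : Matrix (Fin m) (Fin m) ℝ)).PosSemidef)
    (hR : ∀ t, (R t).PosDef)
    (hPinv : ∀ t, 0 ≤ t → ((P t)⁻¹ - p₁ • (1 : Matrix (Fin m) (Fin m) ℝ)).PosSemidef)
    (hPdiff : ∀ t i j, HasDerivAt (fun s => P s i j) (P' t i j) t)
    (hRic : ∀ t, P' t =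
      A₁ t * P t + P t * (A₁ t)ᵀ + Q t - P t * (C₁ t)ᵀ * (R t)⁻¹ * C₁ t * P t)
    (hη : ∀ t, HasDerivAt η ((A₁ t - P t * (C₁ t)ᵀ * (R t)⁻¹ * C₁ t) *ᵥ η t) t) :
    ∀ t, 0 ≤ t → ∃ d : ℝ,
      HasDerivAt (fun s => η s ⬝ᵥ ((P s)⁻¹ *ᵥ η s)) d t ∧
      d ≤ -(q₁ * p₁) * (η t ⬝ᵥ ((P t)⁻¹ *ᵥ η t)) :=
  ekf_lyapunov_decay_general q₁ p₁ hq₁ A₁ C₁ Q R P P' η hP hQ hR hPinv hPdiff hRic hη
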